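/- Under the standing assumptions together with the condition that inf_{z∈ℝⁿ} F(z,μ) = c_* for every μ ∈ P(ℝⁿ), set M := sup_{x,μ}|F(x,μ)| and let u^T be the value function associated with the equilibrium flow m^T. Then for every R > 0 there is a constant C(R) (one may take C(R) = √(4M) · sup_{|x|≤R} dist(x,𝒜)) such that for all T > 1: sup_{s ∈ [0,1]} sup_{|x| ≤ R} | u^T(x, sT)/T − c_*(1−s) | ≤ C(R)/T. -/

import Mathlib

open MeasureTheory Set Filter Metric

noncomputable section

abbrev En (n : ℕ) : Type := EuclideanSpace ℝ (Fin n)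
abbrev Pn (n : ℕ) : Type := MeasureTheory.ProbabilityMeasure (En n)

/-- Support of a probability measure. -/
def msupp {n : ℕ} (μ : Pn n) : Set (En n) := {x | ∀ U ∈ nhds x, μ.toMeasure U ≠ 0}

/-- Action functional on the time interval `[t,T]`. -/
def action {n : ℕ} (F : En n → Pn n → ℝ) (m : ℝ → Pn n) (t T : ℝ) (y : ℝ → En n) : ℝ :=
  ∫ s in t..T, (‖deriv y s‖ ^ 2 / 2 + F (y s) (m s))

/-- Admissible curves on `[t,T]` starting at `x`. -/
def Adm {n : ℕ} (t T : ℝ) (x : En n) (y : ℝ → En n) : Prop :=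
  (∃ L : NNReal, LipschitzOnWith L y (Set.Icc t T)) ∧ y t = x

/-- `cmin F μ` is the infimum of `F (·, μ)`. -/
def cmin {n : ℕ} (F : En n → Pn n → ℝ) (μ : Pn n) : ℝ := ⨅ z : En n, F z μ

/-- A Lagrangian equilibrium of the finite-horizon mean field game. -/
def IsEquilibrium {n : ℕ} (F : En n → Pn n → ℝ) (K₀ : Set (En n)) (m₀ : Pn n) (T : ℝ)
    (m : ℝ → Pn n) (Φ : En n → ℝ → En n) : Prop :=
  ContinuousOn m (Set.Icc 0 T) ∧
  (∀ x ∈ K₀, Adm 0 T x (Φ x) ∧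
    ∀ y : ℝ → En n, Adm 0 T x y → action F m 0 T (Φ x) ≤ action F m 0 T y) ∧
  (∀ s ∈ Set.Icc (0:ℝ) T,
    (m s : Measure (En n)) = Measure.map (fun x => Φ x s) (m₀ : Measure (En n)))


/-- Value function of the optimal control problem with horizon `T` and measure flow `m`. -/
def valueFun {n : ℕ} (F : En n → Pn n → ℝ) (m : ℝ → Pn n) (T : ℝ) (x : En n) (t : ℝ) : ℝ :=
  sInf {c | ∃ y : ℝ → En n, Adm t T x y ∧ c = action F m t T y}

/-!
Every admissible curve pays at least `c_*` per unit time, since the kinetic term is nonnegative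
and `F ≥ c_*`; so `u^T(x,t) ≥ c_*(T - t)`. Conversely, the curve that runs from `x` to a point
`a ∈ 𝒜` in unit time and then rests at `a`, where `F(a, ·) ≡ c_*`, costs at most
`c_*(T - t) + |x - a|² / 2 + M - c_*`. Hence `|u^T(x,t) - c_*(T - t)|` is bounded uniformly in `T`
for `|x| ≤ R`, and dividing by `T` at `t = sT` gives the rate `1/T`.
-/

open Topology

theorem measurable_separatelyContinuous_comp {X Y α : Type*} [TopologicalSpace X]
    [TopologicalSpace.MetrizableSpace X] [SecondCountableTopology X] [MeasurableSpace X]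
    [BorelSpace X] [TopologicalSpace Y] [TopologicalSpace α] [MeasurableSpace α]
    [OpensMeasurableSpace α] {F : X → Y → ℝ} (hFx : ∀ μ, Continuous fun x => F x μ)
    (hFm : ∀ x, Continuous fun μ => F x μ) {y : α → X} (hy : Measurable y) {m : α → Y}
    (hm : Continuous m) : Measurable fun s => F (y s) (m s) :=
  (measurable_uncurry_of_continuous_of_measurable (u := fun x s => F x (m s))
    (fun s => hFx (m s)) fun x => ((hFm x).comp hm).measurable).comp (hy.prodMk measurable_id)

theorem aemeasurable_separatelyContinuous_comp_restrict_Icc {X Y : Type*}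
    [TopologicalSpace X] [TopologicalSpace.MetrizableSpace X] [SecondCountableTopology X]
    [MeasurableSpace X] [BorelSpace X] [TopologicalSpace Y] {F : X → Y → ℝ}
    (hFx : ∀ μ, Continuous fun x => F x μ) (hFm : ∀ x, Continuous fun μ => F x μ)
    {t T : ℝ} (htT : t ≤ T) {y : ℝ → X}
    (hy : ContinuousOn y (Icc t T)) {m : ℝ → Y} (hm : ContinuousOn m (Icc t T))
    (ν : Measure ℝ) : AEMeasurable (fun s => F (y s) (m s)) (ν.restrict (Icc t T)) := by
  have hproj : Continuous fun s => (projIcc t T htT s : ℝ) :=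
    continuous_subtype_val.comp continuous_projIcc
  have hext := measurable_separatelyContinuous_comp hFx hFm
    (hy.comp_continuous hproj fun s => (projIcc t T htT s).2).measurable
    (hm.comp_continuous hproj fun s => (projIcc t T htT s).2)
  refine hext.aemeasurable.congr (ae_restrict_of_forall_mem measurableSet_Icc fun s hs => ?_)
  simp only [Function.comp_apply, projIcc_of_mem htT hs]

variable {n : ℕ} {F : En n → Pn n → ℝ} {M c t T : ℝ} {m : ℝ → Pn n}

theorem cmin_le (hM : ∀ x μ, |F x μ| ≤ M) (z : En n) (μ : Pn n) : cmin F μ ≤ F z μ :=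
  ciInf_le ⟨-M, by rintro _ ⟨w, rfl⟩; exact neg_le_of_abs_le (hM w μ)⟩ z

theorem cmin_eq_of_forall_le (hM : ∀ x μ, |F x μ| ≤ M) {a : En n} {μ : Pn n}
    (ha : ∀ w, F a μ ≤ F w μ) : cmin F μ = F a μ :=
  le_antisymm (cmin_le hM a μ) (le_ciInf ha)

theorem intervalIntegrable_lagrangian (hM : ∀ x μ, |F x μ| ≤ M)
    (hFx : ∀ μ, Continuous fun x => F x μ) (hFm : ∀ x, Continuous fun μ => F x μ)
    (htT : t ≤ T) (hm : ContinuousOn m (Icc t T)) {y : ℝ → En n} {L : NNReal}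
    (hy : LipschitzOnWith L y (Icc t T)) :
    IntervalIntegrable (fun s => ‖deriv y s‖ ^ 2 / 2 + F (y s) (m s)) volume t T := by
  rw [intervalIntegrable_iff_integrableOn_Ioo_of_le htT]
  have hmeas : AEStronglyMeasurable (fun s => ‖deriv y s‖ ^ 2 / 2 + F (y s) (m s))
      (volume.restrict (Ioo t T)) :=
    (((measurable_deriv y).norm.pow_const 2).div_const 2 |>.aemeasurable.add
      ((aemeasurable_separatelyContinuous_comp_restrict_Icc hFx hFm htT hy.continuousOn hm
        volume).mono_measure (Measure.restrict_mono Ioo_subset_Icc_self le_rfl)))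
      |>.aestronglyMeasurable
  refine Integrable.mono' (g := fun _ => (L : ℝ) ^ 2 / 2 + M)
    (integrableOn_const measure_Ioo_lt_top.ne) hmeas ?_
  filter_upwards [ae_restrict_mem measurableSet_Ioo] with s hs
  have hderiv : ‖deriv y s‖ ≤ L := norm_deriv_le_of_lipschitzOn (Icc_mem_nhds hs.1 hs.2) hy
  rw [Real.norm_eq_abs]
  refine (abs_add_le _ _).trans (add_le_add ?_ (hM _ _))
  rw [abs_of_nonneg (by positivity)]
  gcongr

theorem mul_sub_le_action (hc : ∀ z μ, c ≤ F z μ) (htT : t ≤ T) {y : ℝ → En n}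
    (hI : IntervalIntegrable (fun s => ‖deriv y s‖ ^ 2 / 2 + F (y s) (m s)) volume t T) :
    c * (T - t) ≤ action F m t T y := by
  have h := intervalIntegral.integral_mono_on htT intervalIntegrable_const hI
    fun s _ => le_add_of_nonneg_of_le (by positivity) (hc (y s) (m s))
  rwa [intervalIntegral.integral_const, smul_eq_mul, mul_comm] at h

section goAndStay

variable {E : Type*} [NormedAddCommGroup E] [NormedSpace ℝ E]

def goAndStay (t : ℝ) (x a : E) (u : ℝ) : E := AffineMap.lineMap x a (min (u - t) 1)

theorem goAndStay_self (t : ℝ) (x a : E) : goAndStay t x a t = x := by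
  simp [goAndStay]

theorem goAndStay_of_le {t u : ℝ} (x a : E) (h : t + 1 ≤ u) : goAndStay t x a u = a := by
  rw [goAndStay, min_eq_right (by linarith), AffineMap.lineMap_apply_one]

theorem deriv_goAndStay_of_lt {t u : ℝ} (x a : E) (h : t + 1 < u) :
    deriv (goAndStay t x a) u = 0 := by
  have hconst : goAndStay t x a =ᶠ[𝓝 u] fun _ => a :=
    eventually_gt_nhds h |>.mono fun w hw => goAndStay_of_le x a hw.le
  rw [hconst.deriv_eq, deriv_const]

theorem lipschitzWith_goAndStay (t : ℝ) (x a : E) :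
    LipschitzWith (nndist x a) (goAndStay t x a) := by
  have h := (lipschitzWith_lineMap (𝕜 := ℝ) x a).comp
    ((IsometryEquiv.subRight t).isometry.lipschitz.min_const 1)
  rw [mul_one] at h
  exact h

end goAndStay

theorem action_goAndStay_le (hM : ∀ x μ, |F x μ| ≤ M)
    (hFx : ∀ μ, Continuous fun x => F x μ) (hFm : ∀ x, Continuous fun μ => F x μ)
    {a : En n} (ha : ∀ μ, F a μ = c) (htT : t ≤ T) (hm : ContinuousOn m (Icc t T)) (x : En n) :
    action F m t T (goAndStay t x a) ≤ c * (T - t) + (dist x a ^ 2 / 2 + M - c) := by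
  set y := goAndStay t x a
  set t' := min (t + 1) T
  have ht' : t ≤ t' := le_min (by linarith) htT
  have ht'T : t' ≤ T := min_le_right _ _
  have ht'_mem : t' ∈ uIcc t T := by rw [uIcc_of_le htT]; exact ⟨ht', ht'T⟩
  have hI := intervalIntegrable_lagrangian hM hFx hFm htT hm
    (lipschitzWith_goAndStay t x a).lipschitzOnWith
  have hmove : ∫ u in t..t', (‖deriv y u‖ ^ 2 / 2 + F (y u) (m u))
      ≤ (dist x a ^ 2 / 2 + M) * (t' - t) := by
    have hspeed (u : ℝ) : ‖deriv y u‖ ^ 2 / 2 ≤ dist x a ^ 2 / 2 := by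
      gcongr
      exact norm_deriv_le_of_lipschitz (lipschitzWith_goAndStay t x a)
    have h := intervalIntegral.integral_mono_on ht'
      (hI.mono_set (uIcc_subset_uIcc_left ht'_mem)) intervalIntegrable_const
      fun u _ => add_le_add (hspeed u) (le_of_abs_le (hM _ (m u)))
    rwa [intervalIntegral.integral_const, smul_eq_mul, mul_comm] at h
  have hrest : ∫ u in t'..T, (‖deriv y u‖ ^ 2 / 2 + F (y u) (m u)) = c * (T - t') := by
    rw [intervalIntegral.integral_congr_ae (g := fun _ => c), intervalIntegral.integral_const,
      smul_eq_mul, mul_comm]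
    refine Eventually.of_forall fun u hu => ?_
    rw [uIoc_of_le ht'T] at hu
    have hu1 : t + 1 < u := (min_lt_iff.1 hu.1).resolve_right (not_lt.2 hu.2)
    simp [y, deriv_goAndStay_of_lt x a hu1, goAndStay_of_le x a hu1.le, ha]
  have hlen : t' - t ≤ 1 := by linarith [min_le_left (t + 1) T]
  have hgap : 0 ≤ dist x a ^ 2 / 2 + M - c := by
    have hcM : c ≤ M := ha (m t) ▸ le_of_abs_le (hM a (m t))
    linarith [sq_nonneg (dist x a)]
  rw [action, ← intervalIntegral.integral_add_adjacent_intervals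
    (hI.mono_set (uIcc_subset_uIcc_left ht'_mem)) (hI.mono_set (uIcc_subset_uIcc_right ht'_mem)),
    hrest]
  nlinarith [mul_le_of_le_one_right hgap hlen]

theorem abs_valueFun_sub_mul_le (hM : ∀ x μ, |F x μ| ≤ M)
    (hFx : ∀ μ, Continuous fun x => F x μ) (hFm : ∀ x, Continuous fun μ => F x μ)
    (hc : ∀ z μ, c ≤ F z μ) {a : En n} (ha : ∀ μ, F a μ = c) (htT : t ≤ T)
    (hm : ContinuousOn m (Icc t T)) (x : En n) :
    |valueFun F m T x t - c * (T - t)| ≤ dist x a ^ 2 / 2 + M - c := by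
  have hlower : ∀ v ∈ {v | ∃ y, Adm t T x y ∧ v = action F m t T y}, c * (T - t) ≤ v := by
    rintro _ ⟨y, ⟨⟨L, hy⟩, -⟩, rfl⟩
    exact mul_sub_le_action hc htT (intervalIntegrable_lagrangian hM hFx hFm htT hm hy)
  have hgo : Adm t T x (goAndStay t x a) :=
    ⟨⟨_, (lipschitzWith_goAndStay t x a).lipschitzOnWith⟩, goAndStay_self t x a⟩
  have hle : valueFun F m T x t ≤ action F m t T (goAndStay t x a) :=
    csInf_le ⟨_, hlower⟩ ⟨_, hgo, rfl⟩
  have hge : c * (T - t) ≤ valueFun F m T x t := le_csInf ⟨_, _, hgo, rfl⟩ hlower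
  have hgo_le := action_goAndStay_le hM hFx hFm ha htT hm x
  rw [abs_le]
  constructor <;> linarith

theorem rate_of_convergence_one_over_T_general {n : ℕ} (F : En n → Pn n → ℝ)
    (M : ℝ) (hM : ∀ (x : En n) (μ : Pn n), |F x μ| ≤ M)
    (hFx : ∀ μ : Pn n, Continuous fun x => F x μ)
    (hFm : ∀ x : En n, Continuous fun μ : Pn n => F x μ)
    (𝒜 : Set (En n)) (hA_ne : 𝒜.Nonempty)
    (hargmin : ∀ μ : Pn n, {z : En n | ∀ w : En n, F z μ ≤ F w μ} = 𝒜)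
    (K₀ : Set (En n))
    (m₀ : Pn n)
    (m : ℝ → ℝ → Pn n) (Φ : ℝ → En n → ℝ → En n)
    (heq : ∀ T : ℝ, 1 < T → IsEquilibrium F K₀ m₀ T (m T) (Φ T))
    (c_star : ℝ) (hc : ∀ μ : Pn n, cmin F μ = c_star) :
    ∀ R : ℝ, 0 < R → ∃ C : ℝ,
      ∀ T : ℝ, 1 < T → ∀ s ∈ Set.Icc (0:ℝ) 1, ∀ x : En n, ‖x‖ ≤ R →
        |valueFun F (m T) T x (s * T) / T - c_star * (1 - s)| ≤ C / T := by
  obtain ⟨a, ha⟩ := hA_ne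
  have hcF : ∀ z μ, c_star ≤ F z μ := fun z μ => hc μ ▸ cmin_le hM z μ
  have hFa : ∀ μ, F a μ = c_star := fun μ =>
    (hc μ ▸ cmin_eq_of_forall_le hM (Set.ext_iff.1 (hargmin μ) a |>.2 ha)).symm
  intro R _
  refine ⟨(R + ‖a‖) ^ 2 / 2 + M - c_star, fun T hT s hs x hx => ?_⟩
  have hT0 : 0 < T := one_pos.trans hT
  have hsT : s * T ≤ T := mul_le_of_le_one_left hT0.le hs.2
  have hm : ContinuousOn (m T) (Icc (s * T) T) :=
    (heq T hT).1.mono (Icc_subset_Icc (mul_nonneg hs.1 hT0.le) le_rfl)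
  have hdist : dist x a ≤ R + ‖a‖ := (dist_le_norm_add_norm x a).trans (by linarith)
  have hbound := abs_valueFun_sub_mul_le hM hFx hFm hcF hFa hsT hm x
  rw [show valueFun F (m T) T x (s * T) / T - c_star * (1 - s)
      = (valueFun F (m T) T x (s * T) - c_star * (T - s * T)) / T by field_simp,
    abs_div, abs_of_pos hT0]
  gcongr
  exact hbound.trans (by gcongr)

/-- **Rate of convergence of order `1/T` for the long-time limit.** Under the standing
assumptions and `inf_z F(z,μ) = c_*` for every `μ`, for every `R > 0` there is a constant
`C(R)` such that for all `T > 1`: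
`sup_{s∈[0,1]} sup_{|x|≤R} |u^T(x,sT)/T − c_*(1−s)| ≤ C(R)/T`. -/
theorem rate_of_convergence_one_over_T {n : ℕ} (F : En n → Pn n → ℝ)
    (M : ℝ) (hM : ∀ (x : En n) (μ : Pn n), |F x μ| ≤ M)
    (hFx : ∀ μ : Pn n, Continuous fun x => F x μ)
    (hFm : ∀ x : En n, Continuous fun μ : Pn n => F x μ)
    (𝒜 : Set (En n)) (hA_ne : 𝒜.Nonempty) (hA_closed : IsClosed 𝒜)
    (hargmin : ∀ μ : Pn n, {z : En n | ∀ w : En n, F z μ ≤ F w μ} = 𝒜)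
    (γ : ℝ → ℝ) (hγ_pos : ∀ r : ℝ, 0 < r → 0 < γ r)
    (hγ : ∀ r : ℝ, 0 < r → ∀ (z : En n) (μ : Pn n),
      r < Metric.infDist z 𝒜 → γ r ≤ F z μ - cmin F μ)
    (K₀ : Set (En n)) (hK₀ : IsCompact K₀)
    (m₀ : Pn n) (hm₀ : msupp m₀ ⊆ K₀)
    (m : ℝ → ℝ → Pn n) (Φ : ℝ → En n → ℝ → En n)
    (heq : ∀ T : ℝ, 1 < T → IsEquilibrium F K₀ m₀ T (m T) (Φ T))
    (χ' : ℝ) (hχ' : 0 < χ')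
    (hLip : ∀ T : ℝ, 1 < T → ∀ x ∈ K₀,
      LipschitzOnWith (Real.toNNReal χ') (Φ T x) (Set.Icc 0 T))
    (c_star : ℝ) (hc : ∀ μ : Pn n, cmin F μ = c_star) :
    ∀ R : ℝ, 0 < R → ∃ C : ℝ,
      ∀ T : ℝ, 1 < T → ∀ s ∈ Set.Icc (0:ℝ) 1, ∀ x : En n, ‖x‖ ≤ R →
        |valueFun F (m T) T x (s * T) / T - c_star * (1 - s)| ≤ C / T :=
  rate_of_convergence_one_over_T_general F M hM hFx hFm 𝒜 hA_ne hargmin K₀ m₀ m Φ heq c_star hc
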